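/- For weights λ, λ' ∈ X and any homogeneous x ∈ U^-, the E_i actions on the Verma modules M_λ and M_{λ+λ'} (both realized on U^-) are related by E_i^λ(x·ξ_λ) = v^{−(i,λ')}·E_i^{λ+λ'}(x·ξ_{λ+λ'}) − v^{−(i, λ+λ'−|x|+α_i)}·[(i,λ')]·_i r̄(x), where _i r̄ is the twisted derivation with _i r̄(1)=0, _i r̄(θ_j)=δ_{ij}, _i r̄(xy) = _i r̄(x)y + v^{(i,−|x|)}x·_i r̄(y). -/

import Mathlib

noncomputable section
open scoped Classical TensorProduct

/-- The field `ℚ(v)` of rational functions over `ℚ`. -/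
abbrev Kq : Type := RatFunc ℚ

/-- The indeterminate `v`. -/
def vq : Kq := RatFunc.X

/-- The quantum integer `[s] = (v^s - v^{-s})/(v - v⁻¹)`. -/
def qint (s : ℤ) : Kq := (vq ^ s - vq ^ (-s)) / (vq - vq⁻¹)

/-- The quantum factorial `[s]!`. -/
def qfact (n : ℕ) : Kq := ∏ k ∈ Finset.range n, qint (k + 1)

/-- The quantum binomial coefficient. -/
def qbinom (s t : ℕ) : Kq := qfact s / (qfact t * qfact (s - t))

/-- A finite graph without loops on vertex set `I`, recorded by the number
`E i j` of edges joining `i` and `j`. -/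
structure GraphData (I : Type) where
  E : I → I → ℕ
  symm : ∀ i j, E i j = E j i
  loopless : ∀ i, E i i = 0

variable {I : Type}

/-- The Cartan pairing `(i,j) = 2δ_{ij} − #{edges between i and j}`. -/
def cart (G : GraphData I) (i j : I) : ℤ := if i = j then 2 else -(G.E i j : ℤ)

/-- The pairing `(i, μ)` of a vertex with an element `μ ∈ ℕ[I]`. -/
def pairing (G : GraphData I) (i : I) (μ : I →₀ ℕ) : ℤ :=
  μ.sum fun j n => (n : ℤ) * cart G i j

/-- The quantum Serre relation element attached to `i ≠ j`. -/
def serreElem (G : GraphData I) (i j : I) : FreeAlgebra Kq I :=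
  ∑ p ∈ Finset.range (2 + G.E i j),
    (((-1 : Kq) ^ p) * qbinom (1 + G.E i j) p) •
      (FreeAlgebra.ι Kq i ^ p * FreeAlgebra.ι Kq j *
        FreeAlgebra.ι Kq i ^ (1 + G.E i j - p))

/-- The quantum Serre relations. -/
inductive SerreRel (G : GraphData I) : FreeAlgebra Kq I → FreeAlgebra Kq I → Prop
  | serre : ∀ i j, i ≠ j → SerreRel G (serreElem G i j) 0

/-- Lusztig's algebra `f = U⁻` attached to the graph `G`: the free algebra on the
generators `θ_i` modulo the quantum Serre relations. -/
abbrev UM (G : GraphData I) : Type := RingQuot (SerreRel G)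

/-- The generator `θ_i` of `U⁻`. -/
def θ (G : GraphData I) (i : I) : UM G :=
  RingQuot.mkAlgHom Kq (SerreRel G) (FreeAlgebra.ι Kq i)

/-- The monomial `θ_{i_1} ⋯ θ_{i_m}`. -/
def word (G : GraphData I) (l : List I) : UM G := (l.map (θ G)).prod

/-- The degree in `ℕ[I]` of a monomial. -/
def degw (l : List I) : I →₀ ℕ := (l.map fun i => Finsupp.single i 1).sum

/-- The homogeneous component of `U⁻` of degree `μ ∈ ℕ[I]`. -/
def homog (G : GraphData I) (μ : I →₀ ℕ) : Submodule Kq (UM G) :=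
  Submodule.span Kq {x | ∃ l : List I, degw l = μ ∧ x = word G l}

/-!
Both sides are linear in `x`, so it suffices to treat monomials `θ_j w`, by induction on their
length. The recursions for `E_i^λ`, `E_i^{λ+λ'}` and `_i r̄` turn the step into `θ_j` times the
inductive hypothesis (the factor `v^{-(i,j)}` produced by `_i r̄` is exactly the change of the
coefficient when `|x|` grows by `α_j`), plus, when `j = i`, a multiple of `w` that vanishes by
the quantum-integer identity `[a] = v^{-b}[a+b] - v^{-(a+b)}[b]` with `a = (i,λ) - (i,|w|)`,
`b = (i,λ')`.
-/

lemma vq_ne_zero : vq ≠ 0 := RatFunc.X_ne_zero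

lemma qint_shift (a b : ℤ) :
    qint a = vq ^ (-b) * qint (a + b) - vq ^ (-(a + b)) * qint b := by
  unfold qint
  rw [neg_add, zpow_add₀ vq_ne_zero, zpow_add₀ vq_ne_zero]
  have := zpow_ne_zero a vq_ne_zero
  have := zpow_ne_zero b vq_ne_zero
  simp only [zpow_neg]
  field_simp
  ring

lemma qint_sub_eq_shift (a b p : ℤ) :
    qint (a - p) = vq ^ (-b) * qint (a + b - p) - vq ^ (-(a + b - (2 + p) + 2)) * qint b := by
  rw [qint_shift (a - p) b]
  ring_nf

lemma vq_zpow_shift_mul (s c p : ℤ) (q : Kq) :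
    vq ^ (-(s - (c + p) + 2)) * q * vq ^ (-c) = vq ^ (-(s - p + 2)) * q := by
  rw [mul_right_comm, ← zpow_add₀ vq_ne_zero]
  ring_nf

section

variable (G : GraphData I)

lemma pairing_add (i : I) (μ ν : I →₀ ℕ) :
    pairing G i (μ + ν) = pairing G i μ + pairing G i ν :=
  Finsupp.sum_add_index' (by simp) fun _ _ _ => by push_cast; ring

lemma pairing_single (i j : I) :
    pairing G i (Finsupp.single j 1) = cart G i j := by
  simp [pairing]

lemma pairing_degw_cons (i j : I) (l : List I) :
    pairing G i (degw (j :: l)) = cart G i j + pairing G i (degw l) := by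
  rw [show degw (j :: l) = Finsupp.single j 1 + degw l by simp [degw], pairing_add,
    pairing_single]

lemma word_cons (j : I) (l : List I) :
    word G (j :: l) = θ G j * word G l := by
  simp [word]

lemma word_mem_homog (l : List I) : word G l ∈ homog G (degw l) :=
  Submodule.subset_span ⟨l, rfl, rfl⟩

lemma θ_mem_homog (j : I) : θ G j ∈ homog G (Finsupp.single j 1) := by
  simpa [word, degw] using word_mem_homog G [j]

end

lemma eqOn_homog_of_eq_word {G : GraphData I} {M : Type*} [AddCommGroup M] [Module Kq M]
    {μ : I →₀ ℕ} {f g : UM G →ₗ[Kq] M} (h : ∀ l, degw l = μ → f (word G l) = g (word G l)) :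
    Set.EqOn f g (homog G μ) :=
  LinearMap.eqOn_span' fun _ ⟨l, hl, hx⟩ => hx ▸ h l hl

/-- Weights enter only through `lam i = (i,λ)` and `lam' i = (i,λ')`. -/
theorem verma_E_shift (G : GraphData I) (lam lam' : I → ℤ) (i : I)
    (Elam Elam' rbar : UM G →ₗ[Kq] UM G)
    -- `Elam` is the `E_i`-action on `M_λ`:
    (hElam1 : Elam 1 = 0)
    (hElamrec : ∀ (j : I) (μ : I →₀ ℕ) (x : UM G), x ∈ homog G μ →
      Elam (θ G j * x) =
        θ G j * Elam x + (if i = j then qint (lam i - pairing G i μ) else 0) • x)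
    -- `Elam'` is the `E_i`-action on `M_{λ+λ'}`:
    (hElam'1 : Elam' 1 = 0)
    (hElam'rec : ∀ (j : I) (μ : I →₀ ℕ) (x : UM G), x ∈ homog G μ →
      Elam' (θ G j * x) =
        θ G j * Elam' x +
          (if i = j then qint (lam i + lam' i - pairing G i μ) else 0) • x)
    -- `rbar` is the twisted derivation `_i r̄`:
    (hr1 : rbar 1 = 0)
    (hr2 : ∀ j : I, rbar (θ G j) = if i = j then 1 else 0)
    (hr3 : ∀ (μ ν : I →₀ ℕ) (x y : UM G), x ∈ homog G μ → y ∈ homog G ν →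
      rbar (x * y) = rbar x * y + vq ^ (-(pairing G i μ)) • (x * rbar y)) :
    ∀ (μ : I →₀ ℕ) (x : UM G), x ∈ homog G μ →
      Elam x =
        vq ^ (-(lam' i)) • Elam' x -
          (vq ^ (-(lam i + lam' i - pairing G i μ + 2)) * qint (lam' i)) • rbar x := by
  have hword : ∀ l : List I, Elam (word G l) = vq ^ (-(lam' i)) • Elam' (word G l) -
      (vq ^ (-(lam i + lam' i - pairing G i (degw l) + 2)) * qint (lam' i)) • rbar (word G l) := by
    intro l
    induction l with
    | nil => simp [word, hElam1, hElam'1, hr1]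
    | cons j l ih =>
      have hl := word_mem_homog G l
      rw [word_cons, hElamrec j _ _ hl, hElam'rec j _ _ hl, hr3 _ _ _ _ (θ_mem_homog G j) hl,
        hr2, ih, pairing_degw_cons, pairing_single]
      simp only [mul_sub, mul_smul_comm, smul_add, smul_smul, vq_zpow_shift_mul]
      split_ifs with hij
      · subst hij
        rw [show cart G i i = 2 from if_pos rfl, qint_sub_eq_shift _ (lam' i),
          sub_smul (R := Kq) (M := UM G), one_mul]
        abel
      · simp only [mul_zero, zero_smul, zero_mul, smul_zero, add_zero, zero_add]
  intro μ x hx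
  refine eqOn_homog_of_eq_word (g := vq ^ (-(lam' i)) • Elam' -
    (vq ^ (-(lam i + lam' i - pairing G i μ + 2)) * qint (lam' i)) • rbar) ?_ hx
  rintro l rfl
  exact hword l
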